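/- arXiv:1412.6790 — 5 statements merged into one kernel-verified Lean document; each statement's English description precedes it below -/
import Mathlib

section
/- (Decency lemma, part D2) Assume a lift/meet constraint structure with a compatibility relation ε satisfying axioms Aπ, Aε, A∧, and A↑. Then for all constraints σ of domain d and σ', σ'' of domain d extended by a fresh meta-variable X, if σ'' ≈ (↑σ)∧σ' then the projection of σ'' is ≈-equivalent to σ ∧ (projection of σ'), where ≈ is the equivalence generated by the compatibility-based pre-order. -/
/-- The compatibility-based pre-order. -/
def cpre {I C : Type*} (eps : I → C → Prop) (σ σ' : C) : Prop :=
  {ρ : I | eps ρ σ} ⊆ {ρ : I | eps ρ σ'}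

/-- The equivalence generated by the compatibility-based pre-order. -/
def cequ {I C : Type*} (eps : I → C → Prop) (σ σ' : C) : Prop :=
  cpre eps σ σ' ∧ cpre eps σ' σ

/-- Decency lemma, part D2.  `I` is the set of instantiations of domain `d`,
`T` the set of ground terms of domain `d`, so that `I × T` is the set of
instantiations of the extended domain `d,X`; `C = Ψ_d` and `C' = Ψ_{d,X}` with
compatibility relations `eps`, `eps'`, projection `proj`, lift `lift`, witness
builder `bind`, and meets `meet`, `meet'`.  Under axioms Aπ, Aε, A∧ and A↑:
if `σ'' ≈ (↑σ) ∧ σ'` then `π(σ'') ≈ σ ∧ π(σ')`. -/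
theorem decency_D2 {I T C C' : Type*}
    (eps : I → C → Prop) (eps' : I × T → C' → Prop)
    (proj : C' → C) (lift : C → C') (bind : C' → I → T)
    (meet : C → C → C) (meet' : C' → C' → C')
    (Aproj : ∀ (ρ : I) (t : T) (σ : C'), eps' (ρ, t) σ → eps ρ (proj σ))
    (Aeps : ∀ (ρ : I) (σ : C'), eps ρ (proj σ) → eps' (ρ, bind σ ρ) σ)
    (Ameet : ∀ (ρ : I) (σ σ' : C), (eps ρ σ ∧ eps ρ σ') ↔ eps ρ (meet σ σ'))
    (Ameet' : ∀ (ρ : I × T) (σ σ' : C'), (eps' ρ σ ∧ eps' ρ σ') ↔ eps' ρ (meet' σ σ'))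
    (Alift : ∀ (ρ : I) (σ : C) (σ' : C'),
      eps' (ρ, bind σ' ρ) (lift σ) ↔ eps ρ σ)
    (σ : C) (σ' σ'' : C')
    (h : cequ eps' σ'' (meet' (lift σ) σ')) :
    cequ eps (proj σ'') (meet σ (proj σ')) := by
  constructor
  · intro ρ hρ
    have h1 := Aeps ρ σ'' hρ
    have h2 := h.1 h1
    obtain ⟨hl, hr⟩ := (Ameet' _ _ _).mpr h2
    exact (Ameet ρ σ (proj σ')).mp ⟨(Alift ρ σ σ'').mp hl, Aproj _ _ _ hr⟩
  · intro ρ hρ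
    obtain ⟨h1, h2⟩ := (Ameet ρ σ (proj σ')).mpr hρ
    have h3 : eps' (ρ, bind σ' ρ) (meet' (lift σ) σ') :=
      (Ameet' _ _ _).mp ⟨(Alift ρ σ σ').mpr h1, Aeps ρ σ' h2⟩
    exact Aproj _ _ _ (h.2 h3)
end

section
/- For any constraint σ of domain d, there exists an instantiation ρ ∈ Inst(d) with ρ ε σ if and only if fold(σ) ε σ, where fold iterates the witness builder along projections: fold(σ) is the empty instantiation when d is the initial domain, and fold(σ) = (fold(π(σ)), X ↦ bind_σ(fold(π(σ)))) when d = d',X. -/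
/-- Instantiations of a domain with `n` meta-variables (eigenvariables are
ignored: they leave both instantiations and constraints unchanged):
an instantiation of domain `d,X` is an instantiation of `d` together with a
ground term for `X`; the only instantiation of the initial domain is the
empty one. -/
def Inst.{u_1} (T : Type u_1) : ℕ → Type u_1
| 0 => PUnit
| n + 1 => Inst T n × T

/-- A constraint structure with projections, a compatibility relation and a
witness builder. `T` is the set of ground terms. -/
structure CS (T : Type*) where
  Psi : ℕ → Type*
  proj : ∀ {n}, Psi (n + 1) → Psi n
  eps : ∀ {n}, Inst T n → Psi n → Prop
  bind : ∀ {n}, Psi (n + 1) → Inst T n → T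

/-- Folding a constraint: the canonical instantiation obtained by iterating the
witness builder along projections, down to the initial domain. -/
def CS.fold {T : Type*} (S : CS T) : ∀ {n}, S.Psi n → Inst T n
| 0, _ => PUnit.unit
| _ + 1, σ => (S.fold (S.proj σ), S.bind σ (S.fold (S.proj σ)))

namespace CS

variable {T : Type*} (S : CS T)

theorem eps_fold_of_eps
    (Aproj : ∀ {n} (ρ : Inst T n) (t : T) (σ : S.Psi (n + 1)),
      S.eps (n := n + 1) (ρ, t) σ → S.eps ρ (S.proj σ))
    (Aeps : ∀ {n} (ρ : Inst T n) (σ : S.Psi (n + 1)),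
      S.eps ρ (S.proj σ) → S.eps (n := n + 1) (ρ, S.bind σ ρ) σ) :
    ∀ {n} (σ : S.Psi n) (ρ : Inst T n), S.eps ρ σ → S.eps (S.fold σ) σ
  -- `Inst T 0 = PUnit`, so `ρ` is the empty instantiation `S.fold σ` by η for `PUnit`.
  | 0, _, _, h => h
  | _ + 1, σ, (ρ, t), h => Aeps _ σ (eps_fold_of_eps Aproj Aeps (S.proj σ) ρ (Aproj ρ t σ h))

end CS

/-- Under axioms Aπ and Aε, a constraint `σ` is satisfiable (some instantiation
is compatible with it) iff its fold is compatible with it. -/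
theorem satisfiable_iff_fold_compatible {T : Type*} (S : CS T)
    (Aproj : ∀ {n} (ρ : Inst T n) (t : T) (σ : S.Psi (n + 1)),
      S.eps (n := n + 1) (ρ, t) σ → S.eps ρ (S.proj σ))
    (Aeps : ∀ {n} (ρ : Inst T n) (σ : S.Psi (n + 1)),
      S.eps ρ (S.proj σ) → S.eps (n := n + 1) (ρ, S.bind σ ρ) σ)
    {n : ℕ} (σ : S.Psi n) :
    (∃ ρ : Inst T n, S.eps ρ σ) ↔ S.eps (S.fold σ) σ :=
  ⟨fun ⟨ρ, h⟩ => S.eps_fold_of_eps Aproj Aeps σ ρ h, fun h => ⟨S.fold σ, h⟩⟩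
end

section
/- (Completeness of DI) For every instantiation ρ ∈ Inst(d), if ⊢ ρ(Γ) is derivable in the ground calculus LK1, then there exists a constraint σ ∈ Ψ_d such that ⊢^d Γ → σ is derivable in the constraint-producing calculus DI and ρ is compatible with σ. -/
/-- First-order terms: de Bruijn bound variables, eigenvariables,
meta-variables, and function symbols applied to argument lists. -/
inductive Tm : Type
| bv : ℕ → Tm
| ev : ℕ → Tm
| mv : ℕ → Tm
| fn : ℕ → List Tm → Tm

/-- Substitute the term `u` for the bound variable of index `k`. -/
def Tm.bsub (k : ℕ) (u : Tm) : Tm → Tm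
| bv i => if i = k then u else bv i
| ev i => ev i
| mv i => mv i
| fn f ts => fn f (ts.attach.map (fun ⟨t, _⟩ => Tm.bsub k u t))
termination_by t => sizeOf t
decreasing_by simp_wf; have := List.sizeOf_lt_of_mem ‹_›; omega

/-- Apply an instantiation of the meta-variables to a term. -/
def Tm.msub (ρ : ℕ → Tm) : Tm → Tm
| bv i => bv i
| ev i => ev i
| mv i => ρ i
| fn f ts => fn f (ts.attach.map (fun ⟨t, _⟩ => Tm.msub ρ t))
termination_by t => sizeOf t
decreasing_by simp_wf; have := List.sizeOf_lt_of_mem ‹_›; omega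

/-- Ground terms: built from eigenvariables and function symbols only. -/
inductive Tm.Ground : Tm → Prop
| ev (i : ℕ) : Ground (ev i)
| fn (f : ℕ) (ts : List Tm) : (∀ t ∈ ts, Ground t) → Ground (fn f ts)

/-- All eigenvariables of the term are `< ke` and all meta-variables are `< kx`
(and no de Bruijn variable occurs: the term is locally closed). -/
inductive Tm.VarsBelow (ke kx : ℕ) : Tm → Prop
| ev (i : ℕ) : i < ke → VarsBelow ke kx (ev i)
| mv (i : ℕ) : i < kx → VarsBelow ke kx (mv i)
| fn (f : ℕ) (ts : List Tm) : (∀ t ∈ ts, VarsBelow ke kx t) → VarsBelow ke kx (fn f ts)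

/-- The eigenvariable `y` occurs in the term. -/
inductive Tm.HasEv (y : ℕ) : Tm → Prop
| ev : HasEv y (ev y)
| fn (f : ℕ) (ts : List Tm) (t : Tm) : t ∈ ts → HasEv y t → HasEv y (fn f ts)

/-- Literals: a polarity, a predicate symbol, and a list of arguments. -/
abbrev Lit : Type := Bool × ℕ × List Tm

/-- Apply an instantiation of the meta-variables to a literal. -/
def Lit.msub (ρ : ℕ → Tm) (l : Lit) : Lit := (l.1, l.2.1, l.2.2.map (Tm.msub ρ))

/-- First-order formulae in negation normal form. -/
inductive Fm : Type
| lit : Bool → ℕ → List Tm → Fm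
| conj : Fm → Fm → Fm
| disj : Fm → Fm → Fm
| all : Fm → Fm
| ex : Fm → Fm

def Fm.bsub (k : ℕ) (u : Tm) : Fm → Fm
| lit b p ts => lit b p (ts.map (Tm.bsub k u))
| conj A B => conj (A.bsub k u) (B.bsub k u)
| disj A B => disj (A.bsub k u) (B.bsub k u)
| all A => all (A.bsub (k+1) u)
| ex A => ex (A.bsub (k+1) u)

/-- `A.opn u` is `A[x := u]`: the body of a quantifier, opened with the term `u`. -/
def Fm.opn (u : Tm) (A : Fm) : Fm := A.bsub 0 u

/-- Apply an instantiation of the meta-variables to a formula. -/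
def Fm.msub (ρ : ℕ → Tm) : Fm → Fm
| lit b p ts => lit b p (ts.map (Tm.msub ρ))
| conj A B => conj (A.msub ρ) (B.msub ρ)
| disj A B => disj (A.msub ρ) (B.msub ρ)
| all A => all (A.msub ρ)
| ex A => ex (A.msub ρ)

/-- All free variables of the formula are declared: eigenvariables `< ke`,
meta-variables `< kx`. -/
inductive Fm.VarsBelow (ke kx : ℕ) : Fm → Prop
| lit (b : Bool) (p : ℕ) (ts : List Tm) : (∀ t ∈ ts, Tm.VarsBelow ke kx t) → VarsBelow ke kx (lit b p ts)
| conj {A B} : VarsBelow ke kx A → VarsBelow ke kx B → VarsBelow ke kx (conj A B)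
| disj {A B} : VarsBelow ke kx A → VarsBelow ke kx B → VarsBelow ke kx (disj A B)
| all {A} : VarsBelow ke kx A → VarsBelow ke kx (all A)
| ex {A} : VarsBelow ke kx A → VarsBelow ke kx (ex A)

/-- The eigenvariable `y` occurs (free) in the formula. -/
inductive Fm.HasEv (y : ℕ) : Fm → Prop
| lit (b : Bool) (p : ℕ) (ts : List Tm) (t : Tm) : t ∈ ts → Tm.HasEv y t → HasEv y (lit b p ts)
| conjl {A B} : HasEv y A → HasEv y (conj A B)
| conjr {A B} : HasEv y B → HasEv y (conj A B)
| disjl {A B} : HasEv y A → HasEv y (disj A B)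
| disjr {A B} : HasEv y B → HasEv y (disj A B)
| all {A} : HasEv y A → HasEv y (all A)
| ex {A} : HasEv y A → HasEv y (ex A)

/-- The set of literals of a context. -/
def lits (Γ : Multiset Fm) : Set Lit := {l | Fm.lit l.1 l.2.1 l.2.2 ∈ Γ}

/-- Domains: the initial domain, extended by fresh eigenvariables and
fresh meta-variables. -/
inductive Dom : Type
| init : Dom
| addE : Dom → Dom
| addX : Dom → Dom

/-- Number of declared eigenvariables. -/
def Dom.numE : Dom → ℕ
| init => 0
| addE d => d.numE + 1
| addX d => d.numE

/-- Number of declared meta-variables. -/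
def Dom.numX : Dom → ℕ
| init => 0
| addE d => d.numX
| addX d => d.numX + 1

/-- A term of domain `d` that is ground: only eigenvariables of `d`. -/
def TmOfDom (d : Dom) (t : Tm) : Prop := Tm.VarsBelow d.numE 0 t

/-- A formula of domain `d`. -/
def FmOfDom (d : Dom) (A : Fm) : Prop := Fm.VarsBelow d.numE d.numX A

/-- A context of domain `d`. -/
def CtxOfDom (d : Dom) (Γ : Multiset Fm) : Prop := ∀ A ∈ Γ, FmOfDom d A

/-- Instantiations of domain `d`: each meta-variable declared in `d` is mapped
to a ground term over the eigenvariables declared before it. -/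
def InstOK : Dom → (ℕ → Tm) → Prop
| .init, _ => True
| .addE d, ρ => InstOK d ρ
| .addX d, ρ => InstOK d ρ ∧ TmOfDom d (ρ d.numX)

/-- Extend an instantiation with the term `t` for the meta-variable `n`. -/
def extend (ρ : ℕ → Tm) (n : ℕ) (t : Tm) : ℕ → Tm := fun i => if i = n then t else ρ i

/-- The empty instantiation (of the initial domain, which declares no
meta-variables, so that the values below are irrelevant). -/
def emptyInst : ℕ → Tm := fun _ => Tm.fn 0 []
/-- The ground one-sided sequent calculus `LK1` modulo the theory given by the
ground validity predicate `models` on sets of ground literals. -/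
inductive LK1 (models : Set Lit → Prop) : Multiset Fm → Prop
| ax (Γ : Multiset Fm) : models (lits Γ) → LK1 models Γ
| conj {Γ A B} : LK1 models (A ::ₘ Γ) → LK1 models (B ::ₘ Γ) →
    LK1 models (Fm.conj A B ::ₘ Γ)
| disj {Γ A B} : LK1 models (A ::ₘ B ::ₘ Γ) → LK1 models (Fm.disj A B ::ₘ Γ)
| ex {Γ A} (t : Tm) : t.Ground →
    LK1 models (Fm.opn t A ::ₘ Fm.ex A ::ₘ Γ) → LK1 models (Fm.ex A ::ₘ Γ)
| all {Γ A} (y : ℕ) : (∀ B ∈ (Fm.all A ::ₘ Γ), ¬ Fm.HasEv y B) →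
    LK1 models (Fm.opn (Tm.ev y) A ::ₘ Γ) → LK1 models (Fm.all A ::ₘ Γ)
/-- The constraint-producing sequent calculus `DI`, parameterised by the
constraint sets `Psi` (indexed by the number of declared meta-variables),
the meet operator, the projections, and the constraint-producing predicate
`bbc` of the background reasoner. `DI d Γ σ` is the sequent `⊢^d Γ → σ`. -/
inductive DI (Psi : ℕ → Type) (meet : ∀ {n}, Psi n → Psi n → Psi n)
    (proj : ∀ {n}, Psi (n+1) → Psi n)
    (bbc : ∀ d : Dom, Set Lit → Psi d.numX → Prop) :
    ∀ d : Dom, Multiset Fm → Psi d.numX → Prop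
| ax {d : Dom} (Γ : Multiset Fm) (σ : Psi d.numX) :
    bbc d (lits Γ) σ → DI Psi meet proj bbc d Γ σ
| conj {d : Dom} {Γ A B} {σ σ' : Psi d.numX} :
    DI Psi meet proj bbc d (A ::ₘ Γ) σ → DI Psi meet proj bbc d (B ::ₘ Γ) σ' →
    DI Psi meet proj bbc d (Fm.conj A B ::ₘ Γ) (meet σ σ')
| disj {d : Dom} {Γ A B} {σ : Psi d.numX} :
    DI Psi meet proj bbc d (A ::ₘ B ::ₘ Γ) σ →
    DI Psi meet proj bbc d (Fm.disj A B ::ₘ Γ) σ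
| ex {d : Dom} {Γ A} {σ : Psi (d.numX + 1)} :
    DI Psi meet proj bbc d.addX (Fm.opn (Tm.mv d.numX) A ::ₘ Fm.ex A ::ₘ Γ) σ →
    DI Psi meet proj bbc d (Fm.ex A ::ₘ Γ) (proj σ)
| all {d : Dom} {Γ A} {σ : Psi d.numX} :
    DI Psi meet proj bbc d.addE (Fm.opn (Tm.ev d.numE) A ::ₘ Γ) σ →
    DI Psi meet proj bbc d (Fm.all A ::ₘ Γ) σ


section AuxCompleteness

theorem Tm.VarsBelow.mono' {ke kx ke' kx' : ℕ} {t : Tm} (h1 : ke ≤ ke') (h2 : kx ≤ kx')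
    (h : Tm.VarsBelow ke kx t) : Tm.VarsBelow ke' kx' t := by
  induction h with
  | ev i hi => exact .ev i (lt_of_lt_of_le hi h1)
  | mv i hi => exact .mv i (lt_of_lt_of_le hi h2)
  | fn f ts h ih => exact .fn f ts ih

theorem Tm.bsub_ev (k i : ℕ) (u : Tm) : Tm.bsub k u (.ev i) = .ev i := by
  simp [Tm.bsub.eq_def]

theorem Tm.bsub_mv (k i : ℕ) (u : Tm) : Tm.bsub k u (.mv i) = .mv i := by
  simp [Tm.bsub.eq_def]

theorem Tm.bsub_fn (k f : ℕ) (u : Tm) (ts : List Tm) :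
    Tm.bsub k u (.fn f ts) = .fn f (ts.attach.map (fun x => Tm.bsub k u x.1)) := by
  conv_lhs => rw [Tm.bsub.eq_def]

theorem Tm.msub_bv (ρ : ℕ → Tm) (i : ℕ) : Tm.msub ρ (.bv i) = .bv i := by
  simp [Tm.msub.eq_def]

theorem Tm.msub_ev (ρ : ℕ → Tm) (i : ℕ) : Tm.msub ρ (.ev i) = .ev i := by
  simp [Tm.msub.eq_def]

theorem Tm.msub_mv (ρ : ℕ → Tm) (i : ℕ) : Tm.msub ρ (.mv i) = ρ i := by
  simp [Tm.msub.eq_def]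

theorem Tm.msub_fn (ρ : ℕ → Tm) (f : ℕ) (ts : List Tm) :
    Tm.msub ρ (.fn f ts) = .fn f (ts.attach.map (fun x => Tm.msub ρ x.1)) := by
  conv_lhs => rw [Tm.msub.eq_def]

theorem Tm.bsub_eq_self {ke kx : ℕ} {t : Tm} (h : Tm.VarsBelow ke kx t) (k : ℕ) (u : Tm) :
    Tm.bsub k u t = t := by
  induction h with
  | ev i hi => exact Tm.bsub_ev k i u
  | mv i hi => exact Tm.bsub_mv k i u
  | fn f ts h ih =>
    rw [Tm.bsub_fn]
    congr 1
    calc ts.attach.map (fun x => Tm.bsub k u x.1)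
        = ts.attach.map Subtype.val := List.map_congr_left (fun x _ => ih x.1 x.2)
      _ = ts := List.attach_map_subtype_val ts

theorem Tm.msub_congr {ke kx : ℕ} {t : Tm} (h : Tm.VarsBelow ke kx t) {ρ ρ' : ℕ → Tm}
    (hρ : ∀ i < kx, ρ i = ρ' i) : Tm.msub ρ t = Tm.msub ρ' t := by
  induction h with
  | ev i hi => rw [Tm.msub_ev, Tm.msub_ev]
  | mv i hi => rw [Tm.msub_mv, Tm.msub_mv]; exact hρ i hi
  | fn f ts h ih =>
    rw [Tm.msub_fn, Tm.msub_fn]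
    congr 1
    exact List.map_congr_left (fun x _ => ih x.1 x.2)

theorem Tm.msub_varsBelow {ke kx ke' : ℕ} {t : Tm} (h : Tm.VarsBelow ke kx t) (hke : ke ≤ ke')
    {ρ : ℕ → Tm} (hρ : ∀ i < kx, Tm.VarsBelow ke' 0 (ρ i)) :
    Tm.VarsBelow ke' 0 (Tm.msub ρ t) := by
  induction h with
  | ev i hi => rw [Tm.msub_ev]; exact .ev i (lt_of_lt_of_le hi hke)
  | mv i hi => rw [Tm.msub_mv]; exact hρ i hi
  | fn f ts h ih =>
    rw [Tm.msub_fn]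
    refine .fn f _ ?_
    intro t' ht'
    simp only [List.mem_map, List.mem_attach, true_and, Subtype.exists] at ht'
    obtain ⟨t, ht, rfl⟩ := ht'
    exact ih t ht

theorem Fm.VarsBelow.mono' {ke kx ke' kx' : ℕ} {A : Fm} (h1 : ke ≤ ke') (h2 : kx ≤ kx')
    (h : Fm.VarsBelow ke kx A) : Fm.VarsBelow ke' kx' A := by
  induction h with
  | lit b p ts h => exact .lit b p ts (fun t ht => (h t ht).mono' h1 h2)
  | conj _ _ ih1 ih2 => exact .conj ih1 ih2
  | disj _ _ ih1 ih2 => exact .disj ih1 ih2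
  | all _ ih => exact .all ih
  | ex _ ih => exact .ex ih

theorem Fm.bsub_eq_self {ke kx : ℕ} {A : Fm} (h : Fm.VarsBelow ke kx A) (k : ℕ) (u : Tm) :
    A.bsub k u = A := by
  induction h generalizing k with
  | lit b p ts h =>
    rw [Fm.bsub]
    congr 1
    calc List.map (Tm.bsub k u) ts
        = List.map id ts := List.map_congr_left (fun t ht => Tm.bsub_eq_self (h t ht) k u)
      _ = ts := List.map_id ts
  | conj _ _ ih1 ih2 => rw [Fm.bsub, ih1, ih2]
  | disj _ _ ih1 ih2 => rw [Fm.bsub, ih1, ih2]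
  | all _ ih => rw [Fm.bsub, ih]
  | ex _ ih => rw [Fm.bsub, ih]

theorem Fm.opn_eq_self {ke kx : ℕ} {A : Fm} (h : Fm.VarsBelow ke kx A) (u : Tm) :
    A.opn u = A := Fm.bsub_eq_self h 0 u

theorem Fm.msub_congr {ke kx : ℕ} {A : Fm} (h : Fm.VarsBelow ke kx A) {ρ ρ' : ℕ → Tm}
    (hρ : ∀ i < kx, ρ i = ρ' i) : A.msub ρ = A.msub ρ' := by
  induction h with
  | lit b p ts h =>
    rw [Fm.msub, Fm.msub]
    congr 1
    exact List.map_congr_left (fun t ht => Tm.msub_congr (h t ht) hρ)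
  | conj _ _ ih1 ih2 => rw [Fm.msub, Fm.msub, ih1, ih2]
  | disj _ _ ih1 ih2 => rw [Fm.msub, Fm.msub, ih1, ih2]
  | all _ ih => rw [Fm.msub, Fm.msub, ih]
  | ex _ ih => rw [Fm.msub, Fm.msub, ih]

theorem Fm.msub_varsBelow {ke kx ke' : ℕ} {A : Fm} (h : Fm.VarsBelow ke kx A) (hke : ke ≤ ke')
    {ρ : ℕ → Tm} (hρ : ∀ i < kx, Tm.VarsBelow ke' 0 (ρ i)) :
    Fm.VarsBelow ke' 0 (A.msub ρ) := by
  induction h with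
  | lit b p ts h =>
    rw [Fm.msub]
    refine .lit b p _ ?_
    intro t' ht'
    simp only [List.mem_map] at ht'
    obtain ⟨t, ht, rfl⟩ := ht'
    exact Tm.msub_varsBelow (h t ht) hke hρ
  | conj _ _ ih1 ih2 => rw [Fm.msub]; exact .conj ih1 ih2
  | disj _ _ ih1 ih2 => rw [Fm.msub]; exact .disj ih1 ih2
  | all _ ih => rw [Fm.msub]; exact .all ih
  | ex _ ih => rw [Fm.msub]; exact .ex ih

theorem instOK_varsBelow {d : Dom} {ρ : ℕ → Tm} (h : InstOK d ρ) :
    ∀ i < d.numX, Tm.VarsBelow d.numE 0 (ρ i) := by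
  induction d with
  | init => intro i hi; exact absurd hi (Nat.not_lt_zero i)
  | addE d ih =>
    intro i hi
    exact (ih h i hi).mono' (Nat.le_succ _) le_rfl
  | addX d ih =>
    intro i hi
    rcases Nat.lt_succ_iff_lt_or_eq.mp hi with hi' | rfl
    · exact ih h.1 i hi'
    · exact h.2

theorem instOK_congr {d : Dom} {ρ ρ' : ℕ → Tm} (h : InstOK d ρ)
    (hρ : ∀ i < d.numX, ρ' i = ρ i) : InstOK d ρ' := by
  induction d with
  | init => trivial
  | addE d ih => exact ih h hρ
  | addX d ih =>
    refine ⟨ih h.1 (fun i hi => hρ i (Nat.lt_succ_of_lt hi)), ?_⟩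
    rw [hρ d.numX (Nat.lt_succ_self _)]
    exact h.2

theorem lits_map (ρ : ℕ → Tm) (Γ : Multiset Fm) :
    lits (Γ.map (Fm.msub ρ)) = Lit.msub ρ '' lits Γ := by
  ext l
  obtain ⟨b, p, ts⟩ := l
  simp only [lits, Set.mem_setOf_eq, Multiset.mem_map, Set.mem_image]
  constructor
  · rintro ⟨A, hA, hEq⟩
    cases A with
    | lit b' p' ts' =>
      rw [Fm.msub] at hEq
      simp only [Fm.lit.injEq] at hEq
      obtain ⟨rfl, rfl, rfl⟩ := hEq
      exact ⟨(b', p', ts'), hA, rfl⟩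
    | conj A B => rw [Fm.msub] at hEq; exact absurd hEq (by simp)
    | disj A B => rw [Fm.msub] at hEq; exact absurd hEq (by simp)
    | all A => rw [Fm.msub] at hEq; exact absurd hEq (by simp)
    | ex A => rw [Fm.msub] at hEq; exact absurd hEq (by simp)
  · rintro ⟨⟨b', p', ts'⟩, hmem, hEq⟩
    refine ⟨Fm.lit b' p' ts', hmem, ?_⟩
    simp only [Lit.msub, Prod.mk.injEq] at hEq
    obtain ⟨rfl, rfl, rfl⟩ := hEq
    rfl

end AuxCompleteness

/-- Completeness of `DI`: under a meet constraint structure with a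
compatibility relation `eps` satisfying Aπ and A∧, and a constraint-producing
predicate `bbc` relating to the ground validity predicate `models` (Apg):
for every context `Γ` of domain `d` and every instantiation `ρ ∈ Inst(d)`,
if `⊢ ρ(Γ)` is derivable in `LK1` then there is a constraint `σ ∈ Ψ_d` such
that `⊢^d Γ → σ` is derivable in `DI` and `ρ ε σ`. -/
theorem DI_complete (Psi : ℕ → Type) (meet : ∀ {n}, Psi n → Psi n → Psi n)
    (proj : ∀ {n}, Psi (n+1) → Psi n)
    (eps : ∀ {n}, (ℕ → Tm) → Psi n → Prop)
    (models : Set Lit → Prop)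
    (bbc : ∀ d : Dom, Set Lit → Psi d.numX → Prop)
    (Aproj : ∀ (d : Dom) (ρ : ℕ → Tm) (t : Tm) (σ : Psi (d.numX + 1)),
      InstOK d ρ → TmOfDom d t → eps (extend ρ d.numX t) σ → eps ρ (proj σ))
    (Ameet : ∀ {n} (ρ : ℕ → Tm) (σ σ' : Psi n),
      (eps ρ σ ∧ eps ρ σ') ↔ eps ρ (meet σ σ'))
    (Apg : ∀ (d : Dom) (A : Set Lit),
      (∀ l ∈ A, ∀ t ∈ l.2.2, Tm.VarsBelow d.numE d.numX t) →
      ∀ ρ : ℕ → Tm, InstOK d ρ →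
        (models ((Lit.msub ρ) '' A) ↔ ∃ σ : Psi d.numX, bbc d A σ ∧ eps ρ σ))
    (d : Dom) (Γ : Multiset Fm) (hΓ : CtxOfDom d Γ)
    (ρ : ℕ → Tm) (hρ : InstOK d ρ)
    (hder : LK1 models (Γ.map (Fm.msub ρ))) :
    ∃ σ : Psi d.numX,
      DI Psi (fun σ σ' => meet σ σ') (fun σ => proj σ) bbc d Γ σ ∧ eps ρ σ := by
  classical
  generalize hS : Γ.map (Fm.msub ρ) = S at hder
  induction hder generalizing d Γ ρ with
  | ax Γg hm =>
    subst hS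
    rw [lits_map] at hm
    have hvars : ∀ l ∈ lits Γ, ∀ t ∈ l.2.2, Tm.VarsBelow d.numE d.numX t := by
      intro l hl t ht
      have hfm := hΓ _ hl
      cases hfm with
      | lit _ _ _ h => exact h t ht
    obtain ⟨σ, hb, he⟩ := (Apg d (lits Γ) hvars ρ hρ).mp hm
    exact ⟨σ, .ax Γ σ hb, he⟩
  | conj prem1 prem2 ih1 ih2 =>
    rename_i Γg A₀ B₀
    obtain ⟨C, hCmem, hCeq, hrest⟩ := (Multiset.map_eq_cons _ _ _ _).mpr hS
    cases C with
    | conj A B =>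
      rw [Fm.msub] at hCeq
      simp only [Fm.conj.injEq] at hCeq
      obtain ⟨hA₀, hB₀⟩ := hCeq
      have hsplit : Γ = Fm.conj A B ::ₘ Γ.erase (Fm.conj A B) :=
        (Multiset.cons_erase hCmem).symm
      have hΓ' : CtxOfDom d (Γ.erase (Fm.conj A B)) :=
        fun X hX => hΓ X (Multiset.mem_of_mem_erase hX)
      have hCfm := hΓ _ hCmem
      cases hCfm with
      | conj hA hB =>
        have hc1 : CtxOfDom d (A ::ₘ Γ.erase (Fm.conj A B)) := by
          intro X hX
          rcases Multiset.mem_cons.mp hX with rfl | hX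
          · exact hA
          · exact hΓ' X hX
        have hc2 : CtxOfDom d (B ::ₘ Γ.erase (Fm.conj A B)) := by
          intro X hX
          rcases Multiset.mem_cons.mp hX with rfl | hX
          · exact hB
          · exact hΓ' X hX
        obtain ⟨σ, hd1, he1⟩ := ih1 d (A ::ₘ Γ.erase (Fm.conj A B)) hc1 ρ hρ
          (by rw [Multiset.map_cons, hA₀, hrest])
        obtain ⟨σ', hd2, he2⟩ := ih2 d (B ::ₘ Γ.erase (Fm.conj A B)) hc2 ρ hρ
          (by rw [Multiset.map_cons, hB₀, hrest])
        exact ⟨meet σ σ', by rw [hsplit]; exact .conj hd1 hd2, (Ameet ρ σ σ').mp ⟨he1, he2⟩⟩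
    | lit b p ts => rw [Fm.msub] at hCeq; exact absurd hCeq (by simp)
    | disj A B => rw [Fm.msub] at hCeq; exact absurd hCeq (by simp)
    | all A => rw [Fm.msub] at hCeq; exact absurd hCeq (by simp)
    | ex A => rw [Fm.msub] at hCeq; exact absurd hCeq (by simp)
  | disj prem ih =>
    rename_i Γg A₀ B₀
    obtain ⟨C, hCmem, hCeq, hrest⟩ := (Multiset.map_eq_cons _ _ _ _).mpr hS
    cases C with
    | disj A B =>
      rw [Fm.msub] at hCeq
      simp only [Fm.disj.injEq] at hCeq
      obtain ⟨hA₀, hB₀⟩ := hCeq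
      have hsplit : Γ = Fm.disj A B ::ₘ Γ.erase (Fm.disj A B) :=
        (Multiset.cons_erase hCmem).symm
      have hΓ' : CtxOfDom d (Γ.erase (Fm.disj A B)) :=
        fun X hX => hΓ X (Multiset.mem_of_mem_erase hX)
      have hCfm := hΓ _ hCmem
      cases hCfm with
      | disj hA hB =>
        have hc1 : CtxOfDom d (A ::ₘ B ::ₘ Γ.erase (Fm.disj A B)) := by
          intro X hX
          rcases Multiset.mem_cons.mp hX with rfl | hX
          · exact hA
          · rcases Multiset.mem_cons.mp hX with rfl | hX
            · exact hB
            · exact hΓ' X hX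
        obtain ⟨σ, hd1, he1⟩ := ih d (A ::ₘ B ::ₘ Γ.erase (Fm.disj A B)) hc1 ρ hρ
          (by rw [Multiset.map_cons, Multiset.map_cons, hA₀, hB₀, hrest])
        exact ⟨σ, by rw [hsplit]; exact .disj hd1, he1⟩
    | lit b p ts => rw [Fm.msub] at hCeq; exact absurd hCeq (by simp)
    | conj A B => rw [Fm.msub] at hCeq; exact absurd hCeq (by simp)
    | all A => rw [Fm.msub] at hCeq; exact absurd hCeq (by simp)
    | ex A => rw [Fm.msub] at hCeq; exact absurd hCeq (by simp)
  | ex t ht prem ih =>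
    rename_i Γg A₀
    obtain ⟨C, hCmem, hCeq, hrest⟩ := (Multiset.map_eq_cons _ _ _ _).mpr hS
    cases C with
    | ex A =>
      rw [Fm.msub] at hCeq
      simp only [Fm.ex.injEq] at hCeq
      have hsplit : Γ = Fm.ex A ::ₘ Γ.erase (Fm.ex A) :=
        (Multiset.cons_erase hCmem).symm
      have hΓ' : CtxOfDom d (Γ.erase (Fm.ex A)) :=
        fun X hX => hΓ X (Multiset.mem_of_mem_erase hX)
      have hCfm := hΓ _ hCmem
      cases hCfm with
      | ex hA =>
        have hA₀vb : Fm.VarsBelow d.numE 0 A₀ := by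
          rw [← hCeq]
          exact Fm.msub_varsBelow hA le_rfl (instOK_varsBelow hρ)
        have hopn_mv : Fm.opn (Tm.mv d.numX) A = A := Fm.opn_eq_self hA _
        have hρ' : InstOK d.addX (extend ρ d.numX (Tm.fn 0 [])) := by
          refine ⟨instOK_congr hρ (fun i hi => ?_), ?_⟩
          · simp only [extend, if_neg (Nat.ne_of_lt hi)]
          · show TmOfDom d (extend ρ d.numX (Tm.fn 0 []) d.numX)
            simp only [extend, if_pos rfl]
            exact .fn 0 [] (by intro t' ht'; simp at ht')
        have hext_eq : ∀ X : Fm, Fm.VarsBelow d.numE d.numX X →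
            Fm.msub (extend ρ d.numX (Tm.fn 0 [])) X = Fm.msub ρ X := by
          intro X hX
          exact (Fm.msub_congr hX (fun i hi => by
            simp only [extend, if_neg (Nat.ne_of_lt hi)])).symm
        have hc1 : CtxOfDom d.addX (Fm.opn (Tm.mv d.numX) A ::ₘ Fm.ex A ::ₘ Γ.erase (Fm.ex A)) := by
          intro X hX
          rcases Multiset.mem_cons.mp hX with rfl | hX
          · rw [hopn_mv]; exact hA.mono' le_rfl (Nat.le_succ _)
          · rcases Multiset.mem_cons.mp hX with rfl | hX
            · exact .ex (hA.mono' le_rfl (Nat.le_succ _))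
            · exact (hΓ' X hX).mono' le_rfl (Nat.le_succ _)
        obtain ⟨σ, hd1, he1⟩ := ih d.addX
          (Fm.opn (Tm.mv d.numX) A ::ₘ Fm.ex A ::ₘ Γ.erase (Fm.ex A)) hc1
          (extend ρ d.numX (Tm.fn 0 [])) hρ'
          (by
            rw [hopn_mv, Multiset.map_cons, Multiset.map_cons,
              hext_eq A hA, hext_eq (Fm.ex A) (.ex hA), hCeq,
              Multiset.map_congr rfl (fun X hX => hext_eq X (hΓ' X hX)), hrest,
              Fm.msub, hCeq, Fm.opn_eq_self hA₀vb])
        refine ⟨proj σ, by rw [hsplit]; exact .ex hd1, ?_⟩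
        exact Aproj d ρ (Tm.fn 0 []) σ hρ (.fn 0 [] (by intro t' ht'; simp at ht')) he1
    | lit b p ts => rw [Fm.msub] at hCeq; exact absurd hCeq (by simp)
    | conj A B => rw [Fm.msub] at hCeq; exact absurd hCeq (by simp)
    | disj A B => rw [Fm.msub] at hCeq; exact absurd hCeq (by simp)
    | all A => rw [Fm.msub] at hCeq; exact absurd hCeq (by simp)
  | all y hfresh prem ih =>
    rename_i Γg A₀
    obtain ⟨C, hCmem, hCeq, hrest⟩ := (Multiset.map_eq_cons _ _ _ _).mpr hS
    cases C with
    | all A =>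
      rw [Fm.msub] at hCeq
      simp only [Fm.all.injEq] at hCeq
      have hsplit : Γ = Fm.all A ::ₘ Γ.erase (Fm.all A) :=
        (Multiset.cons_erase hCmem).symm
      have hΓ' : CtxOfDom d (Γ.erase (Fm.all A)) :=
        fun X hX => hΓ X (Multiset.mem_of_mem_erase hX)
      have hCfm := hΓ _ hCmem
      cases hCfm with
      | all hA =>
        have hA₀vb : Fm.VarsBelow d.numE 0 A₀ := by
          rw [← hCeq]
          exact Fm.msub_varsBelow hA le_rfl (instOK_varsBelow hρ)
        have hopn_ev : Fm.opn (Tm.ev d.numE) A = A := Fm.opn_eq_self hA _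
        have hc1 : CtxOfDom d.addE (Fm.opn (Tm.ev d.numE) A ::ₘ Γ.erase (Fm.all A)) := by
          intro X hX
          rcases Multiset.mem_cons.mp hX with rfl | hX
          · rw [hopn_ev]; exact hA.mono' (Nat.le_succ _) le_rfl
          · exact (hΓ' X hX).mono' (Nat.le_succ _) le_rfl
        obtain ⟨σ, hd1, he1⟩ := ih d.addE
          (Fm.opn (Tm.ev d.numE) A ::ₘ Γ.erase (Fm.all A)) hc1 ρ hρ
          (by rw [hopn_ev, Multiset.map_cons, hCeq, hrest, Fm.opn_eq_self hA₀vb])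
        exact ⟨σ, by rw [hsplit]; exact .all hd1, he1⟩
    | lit b p ts => rw [Fm.msub] at hCeq; exact absurd hCeq (by simp)
    | conj A B => rw [Fm.msub] at hCeq; exact absurd hCeq (by simp)
    | disj A B => rw [Fm.msub] at hCeq; exact absurd hCeq (by simp)
    | ex A => rw [Fm.msub] at hCeq; exact absurd hCeq (by simp)
end

section
/- (Soundness of SDI relative to DI) Assume a decent triple (≼, ∧, P) and a constraint-refining predicate that relates to a constraint-producing predicate via axioms A1 and A2. If σ → ⊢^d Γ → σ' is derivable in the sequential calculus SDI, then there exists σ'' ∈ Ψ_d such that σ' ≈ σ∧σ'', P(σ∧σ'') holds, and ⊢^d Γ → σ'' is derivable in DI. -/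
/-- The constraint-refining sequent calculus `SDI`, with sequential treatment
of conjunctive branching (in either order), parameterised by the lift
constraint structure and the constraint-refining predicate `bbr`.
`SDI d σ Γ σ'` is the sequent `σ → ⊢^d Γ → σ'`. -/
inductive SDI (Psi : ℕ → Type) (proj : ∀ {n}, Psi (n+1) → Psi n)
    (lift : ∀ {n}, Psi n → Psi (n+1))
    (bbr : ∀ d : Dom, Psi d.numX → Set Lit → Psi d.numX → Prop) :
    ∀ d : Dom, Psi d.numX → Multiset Fm → Psi d.numX → Prop
| ax {d : Dom} (σ : Psi d.numX) (Γ : Multiset Fm) (σ' : Psi d.numX) :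
    bbr d σ (lits Γ) σ' → SDI Psi proj lift bbr d σ Γ σ'
| conj0 {d : Dom} {Γ A B} {σ σ'' σ' : Psi d.numX} :
    SDI Psi proj lift bbr d σ (A ::ₘ Γ) σ'' →
    SDI Psi proj lift bbr d σ'' (B ::ₘ Γ) σ' →
    SDI Psi proj lift bbr d σ (Fm.conj A B ::ₘ Γ) σ'
| conj1 {d : Dom} {Γ A B} {σ σ'' σ' : Psi d.numX} :
    SDI Psi proj lift bbr d σ (B ::ₘ Γ) σ'' →
    SDI Psi proj lift bbr d σ'' (A ::ₘ Γ) σ' →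
    SDI Psi proj lift bbr d σ (Fm.conj A B ::ₘ Γ) σ'
| disj {d : Dom} {Γ A B} {σ σ' : Psi d.numX} :
    SDI Psi proj lift bbr d σ (A ::ₘ B ::ₘ Γ) σ' →
    SDI Psi proj lift bbr d σ (Fm.disj A B ::ₘ Γ) σ'
| ex {d : Dom} {Γ A} {σ : Psi d.numX} {σ' : Psi (d.numX + 1)} :
    SDI Psi proj lift bbr d.addX (lift σ) (Fm.opn (Tm.mv d.numX) A ::ₘ Fm.ex A ::ₘ Γ) σ' →
    SDI Psi proj lift bbr d σ (Fm.ex A ::ₘ Γ) (proj σ')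
| all {d : Dom} {Γ A} {σ σ' : Psi d.numX} :
    SDI Psi proj lift bbr d.addE σ (Fm.opn (Tm.ev d.numE) A ::ₘ Γ) σ' →
    SDI Psi proj lift bbr d σ (Fm.all A ::ₘ Γ) σ'

section Decent
variable (Psi : ℕ → Type) (meet : ∀ {n}, Psi n → Psi n → Psi n)
  (proj : ∀ {n}, Psi (n+1) → Psi n) (lift : ∀ {n}, Psi n → Psi (n+1))
  (pre : ∀ {n}, Psi n → Psi n → Prop) (P : ∀ {n}, Psi n → Prop)
  (bbc : ∀ d : Dom, Set Lit → Psi d.numX → Prop)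
  (bbr : ∀ d : Dom, Psi d.numX → Set Lit → Psi d.numX → Prop)

/-- The equivalence generated by the pre-order `≼`. -/
def equ {n : ℕ} (σ σ' : Psi n) : Prop := pre σ σ' ∧ pre σ' σ

end Decent

/-- Soundness of `SDI` relative to `DI`: assuming a decent triple `(≼, ∧, P)`
(D1, D2, P1, P2, with `≼` a family of pre-orders) and a constraint-refining
predicate `bbr` relating to the constraint-producing predicate `bbc` via
axioms A1 and A2: if `σ → ⊢^d Γ → σ'` is derivable in `SDI`, then there is a
`σ'' ∈ Ψ_d` with `σ' ≈ σ∧σ''`, `P(σ∧σ'')`, and `⊢^d Γ → σ''` derivable in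
`DI`. -/
theorem SDI_sound (Psi : ℕ → Type) (meet : ∀ {n}, Psi n → Psi n → Psi n)
    (proj : ∀ {n}, Psi (n+1) → Psi n) (lift : ∀ {n}, Psi n → Psi (n+1))
    (pre : ∀ {n}, Psi n → Psi n → Prop) (P : ∀ {n}, Psi n → Prop)
    (bbc : ∀ d : Dom, Set Lit → Psi d.numX → Prop)
    (bbr : ∀ d : Dom, Psi d.numX → Set Lit → Psi d.numX → Prop)
    (hrefl : ∀ {n} (σ : Psi n), pre σ σ)
    (htrans : ∀ {n} (σ σ' σ'' : Psi n), pre σ σ' → pre σ' σ'' → pre σ σ'')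
    (D1 : ∀ {n} (σ σ' : Psi n), pre (meet σ σ') σ ∧ pre (meet σ σ') σ' ∧
      ∀ τ : Psi n, pre τ σ → pre τ σ' → pre τ (meet σ σ'))
    (D2 : ∀ {n} (σ : Psi n) (σ' σ'' : Psi (n+1)),
      equ Psi (fun a b => pre a b) σ'' (meet (lift σ) σ') →
      equ Psi (fun a b => pre a b) (proj σ'') (meet σ (proj σ')))
    (P1 : ∀ {n} (σ : Psi (n+1)), P σ ↔ P (proj σ))
    (P2 : ∀ {n} (σ σ' : Psi n), P σ → pre σ σ' → P σ')
    (A1 : ∀ (d : Dom) (A : Set Lit) (σ σ' : Psi d.numX), bbr d σ A σ' →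
      ∃ σ'' : Psi d.numX, equ Psi (fun a b => pre a b) σ' (meet σ σ'') ∧
        P (meet σ σ'') ∧ bbc d A σ'')
    (A2 : ∀ (d : Dom) (A : Set Lit) (σ σ' : Psi d.numX),
      P (meet σ σ') → bbc d A σ' →
      ∃ σ'' : Psi d.numX, equ Psi (fun a b => pre a b) σ'' (meet σ σ') ∧
        bbr d σ A σ'')
    (d : Dom) (Γ : Multiset Fm) (σ σ' : Psi d.numX)
    (hder : SDI Psi (fun τ => proj τ) (fun τ => lift τ) bbr d σ Γ σ') :
    ∃ σ'' : Psi d.numX,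
      equ Psi (fun a b => pre a b) σ' (meet σ σ'') ∧ P (meet σ σ'') ∧
        DI Psi (fun a b => meet a b) (fun τ => proj τ) bbc d Γ σ'' := by
  have eqr : ∀ {n} (a : Psi n), equ Psi (fun a b => pre a b) a a :=
    fun a => ⟨hrefl a, hrefl a⟩
  have eqs : ∀ {n} (a b : Psi n), equ Psi (fun a b => pre a b) a b →
      equ Psi (fun a b => pre a b) b a := fun a b h => ⟨h.2, h.1⟩
  have eqt : ∀ {n} (a b c : Psi n), equ Psi (fun a b => pre a b) a b →
      equ Psi (fun a b => pre a b) b c → equ Psi (fun a b => pre a b) a c :=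
    fun a b c h1 h2 => ⟨htrans _ _ _ h1.1 h2.1, htrans _ _ _ h2.2 h1.2⟩
  have mll : ∀ {n} (a b : Psi n), pre (meet a b) a := fun a b => (D1 a b).1
  have mlr : ∀ {n} (a b : Psi n), pre (meet a b) b := fun a b => (D1 a b).2.1
  have lm : ∀ {n} (a b c : Psi n), pre c a → pre c b → pre c (meet a b) :=
    fun a b c h1 h2 => (D1 a b).2.2 c h1 h2
  have mono : ∀ {n} (a a' b b' : Psi n), pre a a' → pre b b' →
      pre (meet a b) (meet a' b') := fun a a' b b' h1 h2 =>
    lm _ _ _ (htrans _ _ _ (mll a b) h1) (htrans _ _ _ (mlr a b) h2)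
  have mcongr : ∀ {n} (a a' b b' : Psi n), equ Psi (fun a b => pre a b) a a' →
      equ Psi (fun a b => pre a b) b b' →
      equ Psi (fun a b => pre a b) (meet a b) (meet a' b') :=
    fun a a' b b' h1 h2 => ⟨mono _ _ _ _ h1.1 h2.1, mono _ _ _ _ h1.2 h2.2⟩
  have massoc : ∀ {n} (a b c : Psi n),
      equ Psi (fun a b => pre a b) (meet (meet a b) c) (meet a (meet b c)) := by
    intro n a b c
    constructor
    · exact lm _ _ _ (htrans _ _ _ (mll _ _) (mll _ _))
        (lm _ _ _ (htrans _ _ _ (mll _ _) (mlr _ _)) (mlr _ _))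
    · exact lm _ _ _ (lm _ _ _ (mll _ _) (htrans _ _ _ (mlr _ _) (mll _ _)))
        (htrans _ _ _ (mlr _ _) (mlr _ _))
  have mcomm : ∀ {n} (a b : Psi n),
      equ Psi (fun a b => pre a b) (meet a b) (meet b a) :=
    fun a b => ⟨lm _ _ _ (mlr _ _) (mll _ _), lm _ _ _ (mlr _ _) (mll _ _)⟩
  induction hder with
  | ax σ Γ σ' h =>
    obtain ⟨τ, h1, h2, h3⟩ := A1 _ _ _ _ h
    exact ⟨τ, h1, h2, DI.ax _ _ h3⟩
  | conj0 _ _ ih1 ih2 =>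
    rename_i d Γ A B σ σm σ' _ _
    obtain ⟨τ₁, e1, p1, d1⟩ := ih1
    obtain ⟨τ₂, e2, p2, d2⟩ := ih2
    refine ⟨meet τ₁ τ₂, ?_, ?_, DI.conj d1 d2⟩
    · exact eqt _ _ _ e2 (eqt _ _ _ (mcongr _ _ _ _ e1 (eqr τ₂)) (massoc _ _ _))
    · exact P2 _ _ p2 (eqt _ _ _ (mcongr _ _ _ _ e1 (eqr τ₂)) (massoc _ _ _)).1
  | conj1 _ _ ih1 ih2 =>
    rename_i d Γ A B σ σm σ' _ _
    obtain ⟨τ₁, e1, p1, d1⟩ := ih1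
    obtain ⟨τ₂, e2, p2, d2⟩ := ih2
    have key : equ Psi (fun a b => pre a b) (meet σm τ₂) (meet σ (meet τ₂ τ₁)) :=
      eqt _ _ _ (mcongr _ _ _ _ e1 (eqr τ₂)) (eqt _ _ _ (massoc _ _ _)
        (mcongr _ _ _ _ (eqr σ) (mcomm _ _)))
    refine ⟨meet τ₂ τ₁, eqt _ _ _ e2 key, P2 _ _ p2 key.1, DI.conj d2 d1⟩
  | disj _ ih =>
    obtain ⟨τ, e, p, dd⟩ := ih
    exact ⟨τ, e, p, DI.disj dd⟩
  | ex _ ih =>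
    rename_i d Γ A σ σ' _
    obtain ⟨τ, e, p, dd⟩ := ih
    refine ⟨proj τ, D2 σ τ σ' e, ?_, DI.ex dd⟩
    have := (P1 (meet (lift σ) τ)).mp p
    exact P2 _ _ this (D2 σ τ (meet (lift σ) τ) (eqr _)).1
  | all _ ih =>
    obtain ⟨τ, e, p, dd⟩ := ih
    exact ⟨τ, e, p, DI.all dd⟩
end

section
/- (Weak completeness of SDI) Assume a decent triple (≼, ∧, P) and a constraint-refining predicate relating to the constraint-producing predicate via axioms A1 and A2. If ⊢^d Γ → σ' is derivable in DI, then for every σ ∈ Ψ_d such that P(σ∧σ') holds, there exists σ'' ∈ Ψ_d with σ'' ≈ σ∧σ' such that σ → ⊢^d Γ → σ'' is derivable in SDI. -/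
/-- Weak completeness of `SDI` w.r.t. `DI`: assuming a decent triple
`(≼, ∧, P)` and axioms A1, A2: if `⊢^d Γ → σ'` is derivable in `DI`, then for
every `σ ∈ Ψ_d` with `P(σ∧σ')` there is a `σ'' ≈ σ∧σ'` such that
`σ → ⊢^d Γ → σ''` is derivable in `SDI`. -/
theorem SDI_weak_complete (Psi : ℕ → Type) (meet : ∀ {n}, Psi n → Psi n → Psi n)
    (proj : ∀ {n}, Psi (n+1) → Psi n) (lift : ∀ {n}, Psi n → Psi (n+1))
    (pre : ∀ {n}, Psi n → Psi n → Prop) (P : ∀ {n}, Psi n → Prop)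
    (bbc : ∀ d : Dom, Set Lit → Psi d.numX → Prop)
    (bbr : ∀ d : Dom, Psi d.numX → Set Lit → Psi d.numX → Prop)
    (hrefl : ∀ {n} (σ : Psi n), pre σ σ)
    (htrans : ∀ {n} (σ σ' σ'' : Psi n), pre σ σ' → pre σ' σ'' → pre σ σ'')
    (D1 : ∀ {n} (σ σ' : Psi n), pre (meet σ σ') σ ∧ pre (meet σ σ') σ' ∧
      ∀ τ : Psi n, pre τ σ → pre τ σ' → pre τ (meet σ σ'))
    (D2 : ∀ {n} (σ : Psi n) (σ' σ'' : Psi (n+1)),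
      equ Psi (fun a b => pre a b) σ'' (meet (lift σ) σ') →
      equ Psi (fun a b => pre a b) (proj σ'') (meet σ (proj σ')))
    (P1 : ∀ {n} (σ : Psi (n+1)), P σ ↔ P (proj σ))
    (P2 : ∀ {n} (σ σ' : Psi n), P σ → pre σ σ' → P σ')
    (A1 : ∀ (d : Dom) (A : Set Lit) (σ σ' : Psi d.numX), bbr d σ A σ' →
      ∃ σ'' : Psi d.numX, equ Psi (fun a b => pre a b) σ' (meet σ σ'') ∧
        P (meet σ σ'') ∧ bbc d A σ'')
    (A2 : ∀ (d : Dom) (A : Set Lit) (σ σ' : Psi d.numX),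
      P (meet σ σ') → bbc d A σ' →
      ∃ σ'' : Psi d.numX, equ Psi (fun a b => pre a b) σ'' (meet σ σ') ∧
        bbr d σ A σ'')
    (d : Dom) (Γ : Multiset Fm) (σ' : Psi d.numX)
    (hder : DI Psi (fun a b => meet a b) (fun τ => proj τ) bbc d Γ σ')
    (σ : Psi d.numX) (hP : P (meet σ σ')) :
    ∃ σ'' : Psi d.numX, equ Psi (fun a b => pre a b) σ'' (meet σ σ') ∧
      SDI Psi (fun τ => proj τ) (fun τ => lift τ) bbr d σ Γ σ'' := by
  have D1a : ∀ {n} (a b : Psi n), pre (meet a b) a := fun a b => (D1 a b).1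
  have D1b : ∀ {n} (a b : Psi n), pre (meet a b) b := fun a b => (D1 a b).2.1
  have D1c : ∀ {n} (a b c : Psi n), pre c a → pre c b → pre c (meet a b) :=
    fun a b c => (D1 a b).2.2 c
  have mcong : ∀ {n} (a a' b b' : Psi n), pre a a' → pre b b' →
      pre (meet a b) (meet a' b') := by
    intro n a a' b b' h1 h2
    exact D1c _ _ _ (htrans _ _ _ (D1a a b) h1) (htrans _ _ _ (D1b a b) h2)
  revert σ
  induction hder with
  | ax Γ σ' h =>
    intro σ hP
    obtain ⟨σ'', he, hb⟩ := A2 _ _ _ _ hP h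
    exact ⟨σ'', he, SDI.ax _ _ _ hb⟩
  | conj h1 h2 ih1 ih2 =>
    rename_i d' Γ' A B σ₁ σ₂
    intro σ hP
    have hle : pre (meet σ (meet σ₁ σ₂)) (meet σ σ₁) :=
      mcong _ _ _ _ (hrefl σ) (D1a σ₁ σ₂)
    have hP1 : P (meet σ σ₁) := P2 _ _ hP hle
    obtain ⟨τ₁, hτ₁, hs1⟩ := ih1 σ hP1
    have hτ₁1 : pre τ₁ (meet σ σ₁) := hτ₁.1
    have hτ₁2 : pre (meet σ σ₁) τ₁ := hτ₁.2
    have hle2 : pre (meet σ (meet σ₁ σ₂)) (meet τ₁ σ₂) :=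
      D1c _ _ _ (htrans _ _ _ hle hτ₁2)
        (htrans _ _ _ (D1b _ _) (D1b σ₁ σ₂))
    have hP2 : P (meet τ₁ σ₂) := P2 _ _ hP hle2
    obtain ⟨τ₂, hτ₂, hs2⟩ := ih2 τ₁ hP2
    have hτ₂1 : pre τ₂ (meet τ₁ σ₂) := hτ₂.1
    have hτ₂2 : pre (meet τ₁ σ₂) τ₂ := hτ₂.2
    refine ⟨τ₂, ⟨?_, ?_⟩, SDI.conj0 hs1 hs2⟩
    · have hback : pre (meet τ₁ σ₂) (meet σ (meet σ₁ σ₂)) := by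
        refine D1c _ _ _ ?_ (D1c _ _ _ ?_ (D1b τ₁ σ₂))
        · exact htrans _ _ _ (D1a τ₁ σ₂) (htrans _ _ _ hτ₁1 (D1a σ σ₁))
        · exact htrans _ _ _ (D1a τ₁ σ₂) (htrans _ _ _ hτ₁1 (D1b σ σ₁))
      exact htrans _ _ _ hτ₂1 hback
    · exact htrans _ _ _ hle2 hτ₂2
  | disj h ih =>
    intro σ hP
    obtain ⟨σ'', he, hs⟩ := ih σ hP
    exact ⟨σ'', he, SDI.disj hs⟩
  | ex h ih =>
    rename_i d' Γ' A σ₁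
    intro σ hP
    have h2 := D2 σ σ₁ (meet (lift σ) σ₁) ⟨hrefl _, hrefl _⟩
    have hP' : P (meet (lift σ) σ₁) := by
      rw [P1]
      exact P2 _ _ hP h2.2
    obtain ⟨τ, hτ, hs⟩ := ih (lift σ) hP'
    exact ⟨proj τ, D2 σ σ₁ τ hτ, SDI.ex hs⟩
  | all h ih =>
    intro σ hP
    obtain ⟨σ'', he, hs⟩ := ih σ hP
    exact ⟨σ'', he, SDI.all hs⟩
end
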